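/- Let d = (d_1, …, d_m) be a list of non-negative integers with d_1 ≥ … ≥ d_m. If d_1 ≤ 2·d_m and 9·d_1 ≤ 8·m, then there exists a simple bipartite graph on parts A = {a_1,…,a_m} and B = {b_1,…,b_m} (all edges joining A to B) in which a_i has degree d_i and b_i has degree d_i for every 1 ≤ i ≤ m. -/

import Mathlib

/-!
By the Gale–Ryser theorem it suffices that every set `A` of `k` rows satisfies
`∑_{i ∈ A} d i ≤ ∑_j min (d j) k`. Sufficiency is proved greedily, Ryser's way: for row sums `r`
and column sums `s`, joining any row `a` to `r a` columns of largest `s` and lowering those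
column sums by one preserves the condition for the remaining rows.
For `c ≤ d ≤ D`, the rows of `A` exceed `min (d i) k` by at most `D - k` each, while the `m - k`
columns outside `A` contribute at least `min c k` each, so it is enough that
`k (D - k) ≤ (m - k) min c k`; with `D ≤ 2c` and `9D ≤ 8m` this comes down to `(3D - 4k)² ≥ 0`.
-/

open Finset

theorem mul_sub_le_sub_mul_min {n k c D : ℕ} (hk : k ≤ n) (hD : D ≤ 2 * c)
    (hn : 9 * D ≤ 8 * n) : k * (D - k) ≤ (n - k) * min c k := by
  rcases le_total D k with hDk | hkD
  · simp [Nat.sub_eq_zero_of_le hDk]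
  rcases le_total k c with hkc | hck
  · rw [min_eq_right hkc, mul_comm]
    exact Nat.mul_le_mul_right k (by omega)
  · rw [min_eq_left hck]
    zify [hk, hkD]
    -- `16 (n - k) c ≥ 2 (9D - 8k) c ≥ (9D - 8k) D ≥ 16 k (D - k)`
    nlinarith [sq_nonneg (3 * (D : ℤ) - 4 * k),
      mul_nonneg (by omega : (0 : ℤ) ≤ 8 * (n - k) - (9 * D - 8 * k)) (Int.natCast_nonneg c),
      mul_nonneg (by omega : (0 : ℤ) ≤ 9 * D - 8 * k) (by omega : (0 : ℤ) ≤ 2 * c - D)]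

variable {α β : Type*}

def GaleRyserCondition [Fintype β] (r : α → ℕ) (s : β → ℕ) : Prop :=
  ∀ A : Finset α, ∑ i ∈ A, r i ≤ ∑ j, min (s j) #A

theorem galeRyserCondition_of_bounds [Fintype α] [DecidableEq α] {d : α → ℕ} {c D : ℕ}
    (hc : ∀ i, c ≤ d i) (hD : ∀ i, d i ≤ D) (hDc : D ≤ 2 * c)
    (hDn : 9 * D ≤ 8 * Fintype.card α) : GaleRyserCondition d d := by
  intro A
  have hA : #A ≤ Fintype.card α := card_le_univ A
  calc ∑ i ∈ A, d i
      ≤ ∑ i ∈ A, (min (d i) #A + (D - #A)) := sum_le_sum fun i _ => by have := hD i; omega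
    _ = ∑ i ∈ A, min (d i) #A + #A * (D - #A) := by rw [sum_add_distrib, sum_const, smul_eq_mul]
    _ ≤ ∑ i ∈ A, min (d i) #A + #Aᶜ * min c #A := by
        rw [card_compl]; exact Nat.add_le_add_left (mul_sub_le_sub_mul_min hA hDc hDn) _
    _ ≤ ∑ i ∈ A, min (d i) #A + ∑ j ∈ Aᶜ, min (d j) #A := by
        gcongr; exact card_nsmul_le_sum _ _ _ fun j _ => min_le_min_right _ (hc j)
    _ = ∑ j, min (d j) #A := sum_add_sum_compl A _

theorem exists_card_eq_forall_le [Fintype β] (s : β → ℕ) {k : ℕ} (hk : k ≤ Fintype.card β) :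
    ∃ B : Finset β, #B = k ∧ ∀ j ∈ B, ∀ j' ∉ B, s j' ≤ s j := by
  classical
  obtain ⟨B, hB, hmax⟩ := exists_max_image (powersetCard k univ) (fun C => ∑ j ∈ C, s j)
    (powersetCard_nonempty.mpr (by simpa using hk))
  have hBk : #B = k := (mem_powersetCard.mp hB).2
  refine ⟨B, hBk, fun j hj j' hj' => ?_⟩
  have hj'e : j' ∉ B.erase j := fun h => hj' (mem_of_mem_erase h)
  have hswap := hmax (insert j' (B.erase j)) <| mem_powersetCard.mpr
    ⟨subset_univ _, by rw [card_insert_of_notMem hj'e, card_erase_add_one hj, hBk]⟩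
  rw [sum_insert hj'e, ← sum_erase_add B s hj] at hswap
  omega

theorem pos_of_mem_of_card_le [Fintype β] {s : β → ℕ} {B : Finset β}
    (hB : ∀ j ∈ B, ∀ j' ∉ B, s j' ≤ s j) (hcard : #B ≤ #{j | 0 < s j}) :
    ∀ j ∈ B, 0 < s j := by
  classical
  intro j₀ hj₀
  by_contra! hzero
  have hsub : ({j | 0 < s j} : Finset β) ⊆ B.erase j₀ := fun j hj => by
    have hj : 0 < s j := (mem_filter.mp hj).2
    refine mem_erase.mpr ⟨fun h => by subst h; omega, ?_⟩
    by_contra hjB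
    have := hB j₀ hj₀ j hjB
    omega
  have := card_le_card hsub
  rw [card_erase_of_mem hj₀] at this
  have := card_pos.mpr ⟨j₀, hj₀⟩
  omega

theorem card_filter_mem_update [Fintype α] [DecidableEq α] [DecidableEq β] {N : α → Finset β}
    {a : α} (ha : N a = ∅) (B : Finset β) (j : β) :
    #{i | j ∈ Function.update N a B i} = #{i | j ∈ N i} + if j ∈ B then 1 else 0 := by
  rw [card_filter, card_filter, ← Fintype.sum_ite_eq' a (fun _ => if j ∈ B then 1 else 0),
    ← sum_add_distrib]
  refine sum_congr rfl fun i _ => ?_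
  by_cases hi : i = a
  · subst hi; simp [ha]
  · simp [hi]

theorem GaleRyserCondition.le_card_pos [Fintype β] {r : α → ℕ} {s : β → ℕ}
    (h : GaleRyserCondition r s) (a : α) : r a ≤ #{j | 0 < s j} := by
  rw [card_filter]
  calc r a ≤ ∑ j, min (s j) #{a} := by simpa using h {a}
    _ = ∑ j, if 0 < s j then 1 else 0 := sum_congr rfl fun j _ => by
        rw [card_singleton]; split_ifs <;> omega

theorem GaleRyserCondition.update_zero [Fintype β] [DecidableEq α] [DecidableEq β] {r : α → ℕ}
    {s s' : β → ℕ} (h : GaleRyserCondition r s) (a : α) {B : Finset β} (hBa : #B = r a)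
    (hB : ∀ j ∈ B, ∀ j' ∉ B, s j' ≤ s j) (hs : ∀ j, s j = s' j + if j ∈ B then 1 else 0) :
    GaleRyserCondition (Function.update r a 0) s' := by
  have key : ∀ A : Finset α, a ∉ A → ∑ i ∈ A, r i ≤ ∑ j, min (s' j) #A := by
    intro A ha
    by_cases hlow : ∃ j₀ ∈ B, s j₀ ≤ #A
    · obtain ⟨j₀, hj₀, hsj₀⟩ := hlow
      -- every column outside `B` is low too, so each column of `B` loses exactly one unit
      have hcol : ∀ j, min (s j) (#A + 1) = min (s' j) #A + if j ∈ B then 1 else 0 := fun j => by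
        have hsj := hs j
        by_cases hj : j ∈ B
        · simp only [hj, if_true] at hsj ⊢; omega
        · have := hB j₀ hj₀ j hj
          simp only [hj, if_false] at hsj ⊢; omega
      have := h (insert a A)
      rw [sum_insert ha, card_insert_of_notMem ha, sum_congr rfl fun j _ => hcol j,
        sum_add_distrib, sum_boole] at this
      simp only [filter_mem_eq_inter, univ_inter, Nat.cast_id] at this
      omega
    · simp only [not_exists, not_and, not_le] at hlow
      calc ∑ i ∈ A, r i ≤ ∑ j, min (s j) #A := h A
        _ = ∑ j, min (s' j) #A := sum_congr rfl fun j _ => by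
            have hsj := hs j
            by_cases hj : j ∈ B
            · have := hlow j hj
              simp only [hj, if_true] at hsj; omega
            · simp only [hj, if_false] at hsj; omega
  intro A
  calc ∑ i ∈ A, Function.update r a 0 i = ∑ i ∈ A.erase a, r i := by
        rw [← sum_erase A (Function.update_self a 0 r)]
        exact sum_congr rfl fun i hi => Function.update_of_ne (ne_of_mem_erase hi) _ _
    _ ≤ ∑ j, min (s' j) #(A.erase a) := key _ (notMem_erase a A)
    _ ≤ ∑ j, min (s' j) #A := by gcongr; exact erase_subset a A

theorem GaleRyserCondition.exists_realization [Fintype α] [Fintype β] [DecidableEq α]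
    [DecidableEq β] {r : α → ℕ} {s : β → ℕ} (hsum : ∑ i, r i = ∑ j, s j)
    (h : GaleRyserCondition r s) :
    ∃ N : α → Finset β, (∀ i, #(N i) = r i) ∧ ∀ j, #{i | j ∈ N i} = s j := by
  induction hS : (univ.filter fun i => r i ≠ 0) using Finset.induction_on generalizing r s with
  | empty =>
    have hr : ∀ i, r i = 0 := fun i => by simpa using congrArg (i ∈ ·) hS
    have hs : ∀ j, s j = 0 := fun j => sum_eq_zero_iff.mp (by simp [← hsum, hr]) j (mem_univ j)
    exact ⟨fun _ => ∅, fun i => by simp [hr], fun j => by simp [hs]⟩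
  | insert a S haS ih =>
    have hsupp := h.le_card_pos a
    obtain ⟨B, hBa, hB⟩ := exists_card_eq_forall_le s (hsupp.trans (card_le_univ _))
    have hBpos := pos_of_mem_of_card_le hB (hBa ▸ hsupp)
    set s' : β → ℕ := fun j => s j - if j ∈ B then 1 else 0
    have hs : ∀ j, s j = s' j + if j ∈ B then 1 else 0 := fun j => by
      by_cases hj : j ∈ B
      · have := hBpos j hj; simp [s', hj]; omega
      · simp [s', hj]
    have hsum' : ∑ i, Function.update r a 0 i = ∑ j, s' j := by
      have hr : ∑ i, Function.update r a 0 i + r a = ∑ i, r i := by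
        rw [sum_update_of_mem (mem_univ a), zero_add,
          ← sum_eq_sum_sdiff_singleton_add (mem_univ a)]
      have : ∑ j, s j = ∑ j, s' j + #B := by simp [hs, sum_add_distrib]
      omega
    have hS' : ({i | Function.update r a 0 i ≠ 0} : Finset α) = S := by
      ext i
      by_cases hi : i = a
      · simp [hi, haS]
      · simpa [hi] using congrArg (i ∈ ·) hS
    obtain ⟨N, hrow, hcol⟩ := ih hsum' (h.update_zero a hBa hB hs) hS'
    have hNa : N a = ∅ := card_eq_zero.mp (by simp [hrow])
    refine ⟨Function.update N a B, fun i => ?_, fun j => ?_⟩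
    · by_cases hi : i = a
      · subst hi; simpa using hBa
      · simpa [hi] using hrow i
    · rw [card_filter_mem_update hNa, hcol, hs]

def bipartiteOfNeighbors (N : α → Finset β) : SimpleGraph (α ⊕ β) where
  Adj
    | .inl i, .inr j | .inr j, .inl i => j ∈ N i
    | _, _ => False
  symm := ⟨fun u v h => by cases u <;> cases v <;> exact h⟩
  loopless := ⟨fun u h => by cases u <;> exact h⟩

namespace bipartiteOfNeighbors

variable (N : α → Finset β)

@[simp] theorem adj_inl_inr (i : α) (j : β) :
    (bipartiteOfNeighbors N).Adj (.inl i) (.inr j) ↔ j ∈ N i := Iff.rfl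

@[simp] theorem adj_inr_inl (i : α) (j : β) :
    (bipartiteOfNeighbors N).Adj (.inr j) (.inl i) ↔ j ∈ N i := Iff.rfl

@[simp] theorem not_adj_inl_inl (i i' : α) : ¬(bipartiteOfNeighbors N).Adj (.inl i) (.inl i') :=
  id

@[simp] theorem not_adj_inr_inr (j j' : β) : ¬(bipartiteOfNeighbors N).Adj (.inr j) (.inr j') :=
  id

theorem isLeft_ne_of_adj {u v : α ⊕ β} (h : (bipartiteOfNeighbors N).Adj u v) :
    u.isLeft ≠ v.isLeft := by
  cases u <;> cases v <;> simp_all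

theorem degree_inl (i : α) [Fintype ((bipartiteOfNeighbors N).neighborSet (.inl i))] :
    (bipartiteOfNeighbors N).degree (.inl i) = #(N i) := by
  rw [← card_map .inr, ← SimpleGraph.card_neighborFinset_eq_degree]
  congr 1
  ext (_ | j) <;> simp

theorem degree_inr [Fintype α] [DecidableEq β] (j : β)
    [Fintype ((bipartiteOfNeighbors N).neighborSet (.inr j))] :
    (bipartiteOfNeighbors N).degree (.inr j) = #{i | j ∈ N i} := by
  rw [← card_map .inl, ← SimpleGraph.card_neighborFinset_eq_degree]
  congr 1
  ext (i | _) <;> simp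

end bipartiteOfNeighbors

/-- Let `d : Fin m → ℕ` be antitone. If `d₁ ≤ 2 * dₘ` and `9 * d₁ ≤ 8 * m`, then there is
a simple bipartite graph on parts `Fin m` and `Fin m` (all edges joining the parts)
whose degree sequence on each side is `d`. -/
theorem bipartite_realizable_of_balanced' (m : ℕ) (hm : 0 < m)
    (d : Fin m → ℕ) (hd : Antitone d)
    (h1 : d ⟨0, hm⟩ ≤ 2 * d ⟨m - 1, Nat.sub_lt hm one_pos⟩)
    (h2 : 9 * d ⟨0, hm⟩ ≤ 8 * m) :
    ∃ (G : SimpleGraph (Fin m ⊕ Fin m)) (_ : DecidableRel G.Adj),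
      (∀ u v, G.Adj u v → u.isLeft ≠ v.isLeft) ∧
      (∀ i : Fin m, G.degree (Sum.inl i) = d i) ∧
      (∀ i : Fin m, G.degree (Sum.inr i) = d i) := by
  have hlow : ∀ i, d ⟨m - 1, Nat.sub_lt hm one_pos⟩ ≤ d i := fun i =>
    hd (Fin.le_def.mpr (Nat.le_sub_one_of_lt i.2))
  have hhigh : ∀ i, d i ≤ d ⟨0, hm⟩ := fun i => hd (Fin.le_def.mpr (Nat.zero_le _))
  have hGR : GaleRyserCondition d d :=
    galeRyserCondition_of_bounds hlow hhigh h1 (by simpa using h2)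
  obtain ⟨N, hrow, hcol⟩ := hGR.exists_realization rfl
  refine ⟨bipartiteOfNeighbors N, Classical.decRel _,
    fun _ _ => bipartiteOfNeighbors.isLeft_ne_of_adj N, fun i => ?_, fun j => ?_⟩
  · rw [bipartiteOfNeighbors.degree_inl, hrow]
  · rw [bipartiteOfNeighbors.degree_inr, hcol]
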